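/- arXiv:1105.2772 — 3 statements merged into one kernel-verified Lean document; each statement's English description precedes it below -/
import Mathlib

section
/- For every real x with −2 ≤ x < 0 and every real n ≥ 2, one has Q₄(x) ≥ n(2−n) > 1 − n², where Q₄(x) = x(x+2)(x+2−n)(x+4−n). Consequently Q₄(x) + n² − 1 > 0 for all −3 < x < 0 and n ≥ 2 (using that Q₄ is positive on (−3,−2) when n ≥ 2). -/
lemma key (n x : ℝ) (hn : 2 ≤ n) (h1 : -2 ≤ x) (h2 : x < 0) :
    n * (2 - n) ≤ x * (x + 2) * (x + 2 - n) * (x + 4 - n) := by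
  set A := x * (x + 2) with hA
  set B := (x + 2 - n) * (x + 4 - n) with hB
  have hArw : x * (x + 2) * (x + 2 - n) * (x + 4 - n) = A * B := by ring
  rw [hArw]
  have hA1 : -1 ≤ A := by nlinarith [sq_nonneg (x+1)]
  have hA0 : A ≤ 0 := mul_nonpos_of_nonpos_of_nonneg h2.le (by linarith)
  rcases le_or_gt 0 B with hb | hb
  · have h3 : -B ≤ A * B := by nlinarith
    have h4 : B ≤ n * (n - 2) := by nlinarith [mul_nonneg (by linarith : (0:ℝ) ≤ x+2) (by linarith : (0:ℝ) ≤ 2*n - x - 4)]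
    nlinarith
  · nlinarith [mul_nonneg (neg_nonneg.2 hA0) (neg_nonneg.2 hb.le)]

/-- For `-2 ≤ x < 0` and `n ≥ 2` one has `Q₄(x) ≥ n(2-n) > 1 - n²`; consequently
`Q₄(x) + n² - 1 > 0` for all `-3 < x < 0`. -/
theorem quartic_lower_bound (n : ℝ) (hn : 2 ≤ n)
    (Q : ℝ → ℝ) (hQ : ∀ x : ℝ, Q x = x * (x + 2) * (x + 2 - n) * (x + 4 - n)) :
    (∀ x : ℝ, -2 ≤ x → x < 0 → n * (2 - n) ≤ Q x) ∧
    n * (2 - n) > 1 - n ^ 2 ∧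
    (∀ x : ℝ, -3 < x → x < 0 → 0 < Q x + n ^ 2 - 1) := by
  refine ⟨fun x h1 h2 => by rw [hQ]; exact key n x hn h1 h2, by nlinarith, fun x h1 h2 => ?_⟩
  rcases le_or_gt (-2) x with h | h
  · have := key n x hn h h2
    rw [hQ]; nlinarith
  · rw [hQ]
    have : 0 ≤ x * (x + 2) * (x + 2 - n) * (x + 4 - n) := by
      have h1 : 0 < (-x) * (-(x+2)) := mul_pos (by linarith) (by linarith)
      have h2 : 0 ≤ (n - 2 - x) * (n - 4 - x) := mul_nonneg (by linarith) (by linarith)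
      nlinarith
    nlinarith
end

section
/- Suppose n ≥ 13 and p ≥ p_c, and let m = 4/(p−1), λ* = m − (n−4)/2 < 0. Then the quartic polynomial 𝒫(λ) = Q₄(m−λ) − p·Q₄(m) has four real roots λ₁ < 2λ* < λ₂ ≤ λ* ≤ λ₃ < 0 < λ₄ satisfying λ₁ + λ₄ = λ₂ + λ₃ = 2λ*; moreover a double root occurs iff 𝒫(λ*) = 0, in which case λ₂ = λ₃ = λ*. -/
/-- Root structure of `𝒫(λ) = Q₄(m-λ) - p Q₄(m)` in the supercritical case:
four real roots `λ₁ < 2λ* < λ₂ ≤ λ* ≤ λ₃ < 0 < λ₄` with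
`λ₁ + λ₄ = λ₂ + λ₃ = 2λ*`, and a double root occurs iff `𝒫(λ*) = 0`, in
which case `λ₂ = λ₃ = λ*`. -/
theorem root_structure (n p m lamstar : ℝ) (hn : 13 ≤ n) (hp : 1 < p)
    (hm : m = 4 / (p - 1)) (hm0 : 0 < m) (hm1 : m < (n - 4) / 2)
    (hlamstar : lamstar = m - (n - 4) / 2)
    (Q : ℝ → ℝ) (hQ : ∀ α : ℝ, Q α = α * (α + 2) * (α + 2 - n) * (α + 4 - n))
    (hQm : 0 < Q m)
    (hsuper : 0 ≤ Q ((n - 4) / 2) - p * Q m)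
    (P : ℝ → ℝ) (hP : ∀ lam : ℝ, P lam = Q (m - lam) - p * Q m) :
    ∃ lam1 lam2 lam3 lam4 : ℝ,
      lam1 < 2 * lamstar ∧ 2 * lamstar < lam2 ∧ lam2 ≤ lamstar ∧
      lamstar ≤ lam3 ∧ lam3 < 0 ∧ 0 < lam4 ∧
      lam1 + lam4 = 2 * lamstar ∧ lam2 + lam3 = 2 * lamstar ∧
      (∀ lam : ℝ, P lam = 0 ↔ lam = lam1 ∨ lam = lam2 ∨ lam = lam3 ∨ lam = lam4) ∧
      (lam2 = lam3 ↔ P lamstar = 0) ∧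
      (P lamstar = 0 → lam2 = lamstar ∧ lam3 = lamstar) := by
  have hc : 0 < p * Q m := mul_pos (by linarith) hQm
  obtain ⟨A, hA_def⟩ : ∃ x : ℝ, x = ((n - 4) / 2) ^ 2 := ⟨_, rfl⟩
  obtain ⟨B, hB_def⟩ : ∃ x : ℝ, x = (n / 2) ^ 2 := ⟨_, rfl⟩
  have hAnn : 0 ≤ A := hA_def ▸ sq_nonneg _
  have hBnn : 0 ≤ B := hB_def ▸ sq_nonneg _
  obtain ⟨D, hD_def⟩ : ∃ x : ℝ, x = (A + B) ^ 2 - 4 * (A * B - p * Q m) := ⟨_, rfl⟩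
  have hDpos : 0 < D := by rw [hD_def]; nlinarith [sq_nonneg (A - B)]
  have hsD : Real.sqrt D ^ 2 = D := Real.sq_sqrt hDpos.le
  have hsDnn : 0 ≤ Real.sqrt D := Real.sqrt_nonneg D
  have hsDpos : 0 < Real.sqrt D := Real.sqrt_pos.mpr hDpos
  obtain ⟨t1, ht1_def⟩ : ∃ x : ℝ, x = (A + B - Real.sqrt D) / 2 := ⟨_, rfl⟩
  obtain ⟨t2, ht2_def⟩ : ∃ x : ℝ, x = (A + B + Real.sqrt D) / 2 := ⟨_, rfl⟩
  have hABc : 0 ≤ A * B - p * Q m := by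
    have hQhalf : Q ((n - 4) / 2) = A * B := by rw [hQ, hA_def, hB_def]; ring
    linarith [hsuper]
  have ht1nn : 0 ≤ t1 := by
    have hle : Real.sqrt D ≤ A + B := by nlinarith
    rw [ht1_def]; linarith
  have ht2pos : 0 < t2 := by
    rw [ht2_def]; nlinarith
  have hfac : ∀ s : ℝ, (s - A) * (s - B) - p * Q m = (s - t1) * (s - t2) := by
    intro s
    rw [ht1_def, ht2_def]
    linear_combination (1 / 4 : ℝ) * hsD + (1 / 4 : ℝ) * hD_def
  have h1 : ∀ lam : ℝ, P lam = ((lam - lamstar) ^ 2 - t1) * ((lam - lamstar) ^ 2 - t2) := by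
    intro lam
    rw [← hfac, hP, hQ, hlamstar, hA_def, hB_def]; ring
  have hP0 : P 0 < 0 := by
    rw [hP]
    simp only [sub_zero]
    nlinarith [mul_pos (sub_pos.mpr hp) hQm]
  have hneg : (lamstar ^ 2 - t1) * (lamstar ^ 2 - t2) < 0 := by
    have h0 := h1 0
    rw [show ((0 : ℝ) - lamstar) ^ 2 = lamstar ^ 2 by ring] at h0
    linarith [h0, hP0]
  have ht12 : t1 ≤ t2 := by rw [ht1_def, ht2_def]; linarith
  have ht1lt : t1 < lamstar ^ 2 := by
    by_contra h
    push_neg at h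
    have h2 : lamstar ^ 2 ≤ t2 := le_trans h ht12
    have hmn : 0 ≤ (t1 - lamstar ^ 2) * (t2 - lamstar ^ 2) :=
      mul_nonneg (by linarith) (by linarith)
    have heq : (t1 - lamstar ^ 2) * (t2 - lamstar ^ 2) =
        (lamstar ^ 2 - t1) * (lamstar ^ 2 - t2) := by ring
    linarith [hmn, heq ▸ hmn]
  have ht2gt : lamstar ^ 2 < t2 := by
    by_contra h
    push_neg at h
    have h2 : t1 ≤ lamstar ^ 2 := le_trans ht12 h
    have hmn : 0 ≤ (lamstar ^ 2 - t1) * (lamstar ^ 2 - t2) :=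
      mul_nonneg (by linarith) (by linarith)
    linarith
  obtain ⟨r1, hr1_def⟩ : ∃ x : ℝ, x = Real.sqrt t1 := ⟨_, rfl⟩
  obtain ⟨r2, hr2_def⟩ : ∃ x : ℝ, x = Real.sqrt t2 := ⟨_, rfl⟩
  have hr1sq : r1 ^ 2 = t1 := by rw [hr1_def]; exact Real.sq_sqrt ht1nn
  have hr2sq : r2 ^ 2 = t2 := by rw [hr2_def]; exact Real.sq_sqrt ht2pos.le
  have hr1nn : 0 ≤ r1 := hr1_def ▸ Real.sqrt_nonneg _
  have hr2nn : 0 ≤ r2 := hr2_def ▸ Real.sqrt_nonneg _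
  have hlamneg : lamstar < 0 := by rw [hlamstar]; linarith
  have hr1lt : r1 < -lamstar := by
    have h := Real.sqrt_lt_sqrt ht1nn ht1lt
    rwa [Real.sqrt_sq_eq_abs, abs_of_neg hlamneg, ← hr1_def] at h
  have hr2gt : -lamstar < r2 := by
    have h := Real.sqrt_lt_sqrt (sq_nonneg lamstar) ht2gt
    rwa [Real.sqrt_sq_eq_abs, abs_of_neg hlamneg, ← hr2_def] at h
  refine ⟨lamstar - r2, lamstar - r1, lamstar + r1, lamstar + r2, by linarith, by linarith,
    by linarith, by linarith, by linarith, by linarith, by ring, by ring, ?_, ?_, ?_⟩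
  · intro lam
    have hPfac : P lam = (lam - (lamstar - r2)) * ((lam - (lamstar - r1)) *
        ((lam - (lamstar + r1)) * (lam - (lamstar + r2)))) := by
      rw [h1 lam, ← hr1sq, ← hr2sq]; ring
    rw [hPfac]
    simp only [mul_eq_zero, sub_eq_zero]
  · have hPls : P lamstar = t1 * t2 := by rw [h1 lamstar]; ring
    constructor
    · intro h
      have hr10 : r1 = 0 := by linarith
      rw [hPls, ← hr1sq, hr10]; ring
    · intro h
      rw [hPls] at h
      have ht10 : t1 = 0 := by
        rcases mul_eq_zero.mp h with h' | h'
        · exact h'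
        · exact absurd h' (ne_of_gt ht2pos)
      have hr10 : r1 = 0 := by rw [hr1_def, ht10, Real.sqrt_zero]
      rw [hr10]; ring
  · intro h
    have hPls : P lamstar = t1 * t2 := by rw [h1 lamstar]; ring
    rw [hPls] at h
    have ht10 : t1 = 0 := by
      rcases mul_eq_zero.mp h with h' | h'
      · exact h'
      · exact absurd h' (ne_of_gt ht2pos)
    have hr10 : r1 = 0 := by rw [hr1_def, ht10, Real.sqrt_zero]
    rw [hr10]
    constructor <;> ring
end

section
/- Under the assumptions n ≥ 13, m = 4/(p−1) ∈ (0,(n−4)/2), Q₄(m) > 0, and Q₄((n−4)/2) − p Q₄(m) ≥ 0, with λ₂ ≤ λ₃ < 0 the two middle roots of 𝒫(λ) = Q₄(m−λ) − pQ₄(m), for every integer k ≥ 1: λ₂ > kλ₃ if and only if 𝒫(2λ*/(k+1)) < 0, where λ* = m − (n−4)/2. Equivalently, λ₂ > kλ₃ iff ℛ_k(p) < 0 where ℛ_k(p) = (p−1)⁴[Q₄((k−1)/(k+1)·4/(p−1) + (n−4)/(k+1)) − p Q₄(4/(p−1))]. -/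
/-!
Writing `c = (n - 4) / 2`, the quartic factors as `Q (c - u) = (u² - c²) (u² - (c + 2)²)`, so it
is a function of `u²` that decreases while `u² ≤ c²`; hence `Q` increases on `[0, c]`. Since
`λ* = m - c`, the map `λ ↦ Q (m - λ)` is then strictly decreasing on `[λ*, m]`, so `λ₃` is the
only zero of `𝒫` there and `𝒫 x < 0 ↔ λ₃ < x` for every `x` in that interval. With
`λ₂ = 2λ* - λ₃`, the inequality `λ₂ > kλ₃` is just `λ₃ < 2λ*/(k+1)`, a point of `[λ*, 0]`.
-/

open Set

/-- The paper's `Q₄`. -/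
def quartic (n α : ℝ) : ℝ := α * (α + 2) * (α + 2 - n) * (α + 4 - n)

lemma quartic_half_sub (n u : ℝ) :
    quartic n ((n - 4) / 2 - u) = (u ^ 2 - ((n - 4) / 2) ^ 2) * (u ^ 2 - (n / 2) ^ 2) := by
  unfold quartic; ring

lemma quartic_strictMonoOn (n : ℝ) : StrictMonoOn (quartic n) (Icc 0 ((n - 4) / 2)) := by
  intro α ⟨hα0, hαc⟩ β ⟨hβ0, hβc⟩ hαβ
  set c := (n - 4) / 2
  have hα : α = c - (c - α) := by ring
  have hβ : β = c - (c - β) := by ring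
  rw [hα, hβ, quartic_half_sub, quartic_half_sub, show n / 2 = c + 2 by ring, ← sub_pos]
  set u := c - α
  set v := c - β
  have hsq : v ^ 2 < u ^ 2 := pow_lt_pow_left₀ (by linarith) (by linarith) two_ne_zero
  have hu : u ^ 2 ≤ c ^ 2 := pow_le_pow_left₀ (by linarith) (by linarith) 2
  have hc : c ^ 2 ≤ (c + 2) ^ 2 := pow_le_pow_left₀ (by linarith) (by linarith) 2
  calc (0 : ℝ) < (u ^ 2 - v ^ 2) * (c ^ 2 + (c + 2) ^ 2 - u ^ 2 - v ^ 2) :=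
        mul_pos (by linarith) (by linarith)
    _ = _ := by ring

lemma lt_mul_iff_lt_two_mul_div {a b s k : ℝ} (hsum : a + b = 2 * s) (hk : 0 < k + 1) :
    a > k * b ↔ b < 2 * s / (k + 1) := by
  rw [lt_div_iff₀ hk, ← hsum]
  constructor <;> intro h <;> linarith

lemma two_mul_div_mem_Icc {s k : ℝ} (hs : s ≤ 0) (hk : 1 ≤ k) : 2 * s / (k + 1) ∈ Icc s 0 := by
  have hk1 : 0 < k + 1 := by linarith
  refine ⟨?_, div_nonpos_of_nonpos_of_nonneg (by linarith) hk1.le⟩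
  rw [le_div_iff₀ hk1]
  nlinarith

lemma ratio_argument_eq {n p k : ℝ} (hp : p ≠ 1) (hk : k + 1 ≠ 0) :
    (k - 1) / (k + 1) * (4 / (p - 1)) + (n - 4) / (k + 1)
      = 4 / (p - 1) - 2 * (4 / (p - 1) - (n - 4) / 2) / (k + 1) := by
  have hp1 : p - 1 ≠ 0 := sub_ne_zero.2 hp
  field_simp
  ring

theorem root_ratio_criterion_general (n p m lamstar lam2 lam3 : ℝ)
    (hp : 1 < p)
    (hm : m = 4 / (p - 1)) (hm0 : 0 < m)
    (hlamstar : lamstar = m - (n - 4) / 2)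
    (Q : ℝ → ℝ) (hQ : ∀ α : ℝ, Q α = α * (α + 2) * (α + 2 - n) * (α + 4 - n))
    (P : ℝ → ℝ) (hP : ∀ lam : ℝ, P lam = Q (m - lam) - p * Q m)
    (hroot3 : P lam3 = 0)
    (h3lo : lamstar ≤ lam3) (h3hi : lam3 < 0)
    (hsum : lam2 + lam3 = 2 * lamstar) :
    ∀ k : ℕ, 1 ≤ k →
      ((lam2 > (k : ℝ) * lam3 ↔ P (2 * lamstar / ((k : ℝ) + 1)) < 0) ∧
       (lam2 > (k : ℝ) * lam3 ↔
         (p - 1) ^ 4 *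
           (Q (((k : ℝ) - 1) / ((k : ℝ) + 1) * (4 / (p - 1)) + (n - 4) / ((k : ℝ) + 1))
             - p * Q (4 / (p - 1))) < 0)) := by
  intro k hk
  have hk1 : (1 : ℝ) ≤ k := by exact_mod_cast hk
  have hmono : StrictMonoOn Q (Icc 0 ((n - 4) / 2)) := funext hQ ▸ quartic_strictMonoOn n
  have hmem : ∀ x ∈ Icc lamstar 0, m - x ∈ Icc 0 ((n - 4) / 2) := fun x ⟨hx1, hx2⟩ =>
    ⟨by linarith, by linarith⟩
  have hx := two_mul_div_mem_Icc (h3lo.trans h3hi.le) hk1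
  have hcriterion : lam2 > (k : ℝ) * lam3 ↔ P (2 * lamstar / ((k : ℝ) + 1)) < 0 := by
    rw [lt_mul_iff_lt_two_mul_div hsum (by linarith), ← hroot3, hP, hP, sub_lt_sub_iff_right,
      hmono.lt_iff_lt (hmem _ hx) (hmem _ ⟨h3lo, h3hi.le⟩), sub_lt_sub_iff_left]
  refine ⟨hcriterion, ?_⟩
  rw [ratio_argument_eq hp.ne' (by linarith), ← hm, ← hlamstar, ← hP]
  exact hcriterion.trans (smul_neg_iff_of_pos_left (by positivity : (0 : ℝ) < (p - 1) ^ 4)).symm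

/-- Criterion for `λ₂ > kλ₃`: it holds iff `𝒫(2λ*/(k+1)) < 0`, equivalently
iff `ℛ_k(p) < 0`. -/
theorem root_ratio_criterion (n p m lamstar lam2 lam3 : ℝ)
    (hn : 13 ≤ n) (hp : 1 < p)
    (hm : m = 4 / (p - 1)) (hm0 : 0 < m) (hm1 : m < (n - 4) / 2)
    (hlamstar : lamstar = m - (n - 4) / 2)
    (Q : ℝ → ℝ) (hQ : ∀ α : ℝ, Q α = α * (α + 2) * (α + 2 - n) * (α + 4 - n))
    (hQm : 0 < Q m)
    (hsuper : 0 ≤ Q ((n - 4) / 2) - p * Q m)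
    (P : ℝ → ℝ) (hP : ∀ lam : ℝ, P lam = Q (m - lam) - p * Q m)
    (hroot2 : P lam2 = 0) (hroot3 : P lam3 = 0)
    (h2lo : 2 * lamstar < lam2) (h2hi : lam2 ≤ lamstar)
    (h3lo : lamstar ≤ lam3) (h3hi : lam3 < 0)
    (hsum : lam2 + lam3 = 2 * lamstar) :
    ∀ k : ℕ, 1 ≤ k →
      ((lam2 > (k : ℝ) * lam3 ↔ P (2 * lamstar / ((k : ℝ) + 1)) < 0) ∧
       (lam2 > (k : ℝ) * lam3 ↔
         (p - 1) ^ 4 *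
           (Q (((k : ℝ) - 1) / ((k : ℝ) + 1) * (4 / (p - 1)) + (n - 4) / ((k : ℝ) + 1))
             - p * Q (4 / (p - 1))) < 0)) :=
  root_ratio_criterion_general n p m lamstar lam2 lam3 hp hm hm0 hlamstar Q hQ P hP hroot3 h3lo h3hi
    hsum
end
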